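/- Assume K is both a ℚ-algebra and an integral domain, χ is an ω-invariant sequence of characters, and E is a free K-module with finite basis. Let n = n₁+⋯+n_k with integers n_i ≥ 0 and set m_i = n₁+⋯+n_i (m₀ = 0). Then for all x₁,…,xₙ ∈ E and x₁*,…,xₙ* ∈ E* one has the Laplace expansions ⟨x₁χ⋯χxₙ, x₁*χ⋯χxₙ*⟩ = Σ_{ρ∈M(χ;n;n₁,…,n_k)} χₙ(ρ)·∏_{i=1}^k ⟨x_{ρ(m_{i−1}+1)}χ⋯χx_{ρ(m_i)}, x_{m_{i−1}+1}*χ⋯χx_{m_i}*⟩ and ⟨x₁χ⋯χxₙ, x₁*χ⋯χxₙ*⟩ = Σ_{ρ∈M(χ;n;n₁,…,n_k)} χₙ(ρ)·∏_{i=1}^k ⟨x_{m_{i−1}+1}χ⋯χx_{m_i}, x_{ρ(m_{i−1}+1)}*χ⋯χx_{ρ(m_i)}*⟩. -/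

import Mathlib

noncomputable section

open scoped TensorProduct DirectSum

/-- The subgroup of permutations of `ℕ` fixing every `n ≥ d`
(the symmetric group `S_d` inside `S_∞`, in 0-indexed form). -/
def Sfin (d : ℕ) : Subgroup (Equiv.Perm ℕ) where
  carrier := {σ | ∀ n, d ≤ n → σ n = n}
  one_mem' := fun _ _ => rfl
  mul_mem' := by
    intro a b ha hb n hn
    simp only [Equiv.Perm.mul_apply]
    rw [hb n hn, ha n hn]
  inv_mem' := by
    intro a ha n hn
    have h1 : a n = n := ha n hn
    calc a⁻¹ n = a⁻¹ (a n) := by rw [h1]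
    _ = n := by simp

/-- The shift `ω` of a finitary permutation of `ℕ`:
`(ω σ) 0 = 0` and `(ω σ) (m+1) = σ m + 1`. -/
def omegaPerm (σ : Equiv.Perm ℕ) : Equiv.Perm ℕ where
  toFun := fun n => match n with
    | 0 => 0
    | m + 1 => σ m + 1
  invFun := fun n => match n with
    | 0 => 0
    | m + 1 => σ⁻¹ m + 1
  left_inv := by
    intro n
    cases n with
    | zero => rfl
    | succ m => simp
  right_inv := by
    intro n
    cases n with
    | zero => rfl
    | succ m => simp

/-- `ω` as an (injective) monoid endomorphism of `S_∞`. -/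
def omegaHom : Equiv.Perm ℕ →* Equiv.Perm ℕ where
  toFun := omegaPerm
  map_one' := by
    ext n
    cases n <;> rfl
  map_mul' := by
    intro a b
    ext n
    cases n <;> rfl

/-- An `ω`-invariant sequence of `K`-valued linear characters
`χ_d : W_d → U(K)` on an `ω`-stable sequence of permutation groups
`W_d ≤ S_d` (indexed over all `d : ℕ`, 0-indexed). -/
structure OmegaSeq (K : Type*) [CommRing K] where
  W : ℕ → Subgroup (Equiv.Perm ℕ)
  W_le : ∀ d, W d ≤ Sfin d
  mono : ∀ d, W d ≤ W (d + 1)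
  omega_mem : ∀ d, ∀ σ ∈ W d, omegaHom σ ∈ W (d + 1)
  χ : ∀ d, W d →* Kˣ
  χ_res : ∀ d (σ : Equiv.Perm ℕ) (h : σ ∈ W d),
    χ (d + 1) ⟨σ, mono d h⟩ = χ d ⟨σ, h⟩
  χ_omega : ∀ d (σ : Equiv.Perm ℕ) (h : σ ∈ W d),
    χ (d + 1) ⟨omegaHom σ, omega_mem d σ h⟩ = χ d ⟨σ, h⟩

lemma Sfin.apply_lt {d : ℕ} {σ : Equiv.Perm ℕ} (h : σ ∈ Sfin d) {x : ℕ}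
    (hx : x < d) : σ x < d := by
  have h' : ∀ n, d ≤ n → σ n = n := h
  by_contra hge
  push_neg at hge
  have h1 : σ (σ x) = σ x := h' (σ x) hge
  have h2 : σ x = x := σ.injective h1
  rw [h2] at hge
  omega

/-- The restriction of a permutation `σ ∈ S_d ≤ S_∞` to a permutation
of `Fin d`. -/
def restrictFin {d : ℕ} (σ : Equiv.Perm ℕ) (h : σ ∈ Sfin d) :
    Equiv.Perm (Fin d) where
  toFun x := ⟨σ x, Sfin.apply_lt h x.2⟩
  invFun x := ⟨σ⁻¹ x, Sfin.apply_lt (inv_mem h) x.2⟩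
  left_inv x := by
    ext
    simp
  right_inv x := by
    ext
    simp

/-- The action of a permutation `σ` of `Fin d` on the `d`-th tensor power
`T^d(E)`, determined by `σ • (x₁ ⊗ ⋯ ⊗ x_d) = x_{σ⁻¹(1)} ⊗ ⋯ ⊗ x_{σ⁻¹(d)}`. -/
def permAct (K : Type*) [CommRing K] (E : Type*) [AddCommGroup E] [Module K E]
    (d : ℕ) (σ : Equiv.Perm (Fin d)) :
    (⨂[K] (_ : Fin d), E) ≃ₗ[K] ⨂[K] (_ : Fin d), E :=
  PiTensorProduct.reindex K (fun _ : Fin d => E) σ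

/-- The permutation of `Fin d` induced by `σ ∈ W_d`. -/
def rAct {K : Type*} [CommRing K] (S : OmegaSeq K) (d : ℕ) (σ : S.W d) :
    Equiv.Perm (Fin d) :=
  restrictFin (σ : Equiv.Perm ℕ) (S.W_le d σ.2)

/-- The submodule `_{χ_d⁻¹}T^d(E)` of `T^d(E)`, generated by the elements
`χ_d⁻¹(σ) z − σ z`, `σ ∈ W_d`. -/
def seqKer {K : Type*} [CommRing K] (S : OmegaSeq K)
    (E : Type*) [AddCommGroup E] [Module K E] (d : ℕ) :
    Submodule K (⨂[K] (_ : Fin d), E) :=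
  Submodule.span K {w | ∃ (σ : S.W d) (z : ⨂[K] (_ : Fin d), E),
    w = (((S.χ d σ)⁻¹ : Kˣ) : K) • z - permAct K E d (rAct S d σ) z}

/-- The `d`-th semi-symmetric power `[χ_d]^d(E) = T^d(E)/_{χ_d⁻¹}T^d(E)`. -/
abbrev Qpow {K : Type*} [CommRing K] (S : OmegaSeq K)
    (E : Type*) [AddCommGroup E] [Module K E] (d : ℕ) :=
  (⨂[K] (_ : Fin d), E) ⧸ seqKer S E d

/-- The semi-symmetric algebra `[χ](E) = ⨁_{d ≥ 0} [χ_d]^d(E)` of weight `χ`,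
as a graded `K`-module. -/
abbrev SemiAlg {K : Type*} [CommRing K] (S : OmegaSeq K)
    (E : Type*) [AddCommGroup E] [Module K E] :=
  ⨁ d : ℕ, Qpow S E d

/-- The decomposable `d-χ`-vector `x₁ χ ⋯ χ x_d` as an element of the
semi-symmetric algebra. -/
def decEl {K : Type*} [CommRing K] (S : OmegaSeq K)
    {E : Type*} [AddCommGroup E] [Module K E] (d : ℕ) (x : Fin d → E) :
    SemiAlg S E :=
  DirectSum.lof K ℕ (fun d => Qpow S E d) d
    (Submodule.Quotient.mk (PiTensorProduct.tprod K x))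

/-- Strict lexicographic comparison of functions. -/
def lexLT {ι : Type*} [LT ι] {α : Type*} [LT α] (f g : ι → α) : Prop :=
  Pi.Lex (· < ·) (fun {_} => (· < ·)) f g

/-- The `m`-th iterate of `ω` as a monoid endomorphism of `S_∞`. -/
def omegaPow : ℕ → (Equiv.Perm ℕ →* Equiv.Perm ℕ)
  | 0 => MonoidHom.id _
  | m + 1 => omegaHom.comp (omegaPow m)

/-- The offset `n₁ + ⋯ + n_{i-1}` of the `i`-th block of a composition. -/
def offset {k : ℕ} (c : Fin k → ℕ) (i : Fin k) : ℕ := ∑ i' ∈ Finset.Iio i, c i'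

/-- The subgroup `X(n₁,…,n_k) = W_{n₁} · ω^{n₁}(W_{n₂}) ⋯ ω^{n₁+⋯+n_{k−1}}(W_{n_k})`
of `W_n`. -/
def Xsub {K : Type*} [CommRing K] (S : OmegaSeq K) {k : ℕ} (c : Fin k → ℕ) :
    Subgroup (Equiv.Perm ℕ) :=
  ⨆ i : Fin k, (S.W (c i)).map (omegaPow (offset c i))

/-- The set `M(χ;n;n₁,…,n_k)` of lexicographically minimal representatives of
the left cosets of `W_n` modulo `X(n₁,…,n_k)`. -/
def MinRepSet {K : Type*} [CommRing K] (S : OmegaSeq K) (n : ℕ) {k : ℕ}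
    (c : Fin k → ℕ) : Set (Equiv.Perm ℕ) :=
  {σ | σ ∈ S.W n ∧ ∀ x ∈ Xsub S c, ¬ lexLT ⇑(σ * x) ⇑σ}

/-- The decomposable `d-χ`-vector `x₀ χ ⋯ χ x_{d-1}` built from the first `d`
terms of a sequence `x : ℕ → E`. -/
def elN {K : Type*} [CommRing K] (S : OmegaSeq K) {E : Type*} [AddCommGroup E]
    [Module K E] (d : ℕ) (x : ℕ → E) : SemiAlg S E :=
  decEl S d (fun t => x t)

/-- The value `d_{χ_d}^{W_d}((⟨x_i, x*_j⟩)_{i,j})` of the canonical pairing on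
a pair of decomposables of degree `d`. -/
def pairVal {K : Type*} [CommRing K] (S : OmegaSeq K) {E : Type*}
    [AddCommGroup E] [Module K E] (d : ℕ) (x : ℕ → E)
    (y : ℕ → Module.Dual K E) : K :=
  ∑ᶠ σ : S.W d, ((S.χ d σ : Kˣ) : K) *
    ∏ t ∈ Finset.range d, y t (x (((σ : Equiv.Perm ℕ))⁻¹ t))

/-- Concatenation (splice) of two sequences, the second starting at
position `d`. -/
def splice {E : Type*} (d : ℕ) (x y : ℕ → E) : ℕ → E :=
  fun t => if t < d then x t else y (t - d)


/-!
Every `σ ∈ W_n` factors uniquely as `σ = ρ · ψ(s)`, where `ρ` is the lexicographically least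
element of the coset `σ X(n₁,…,n_k)` and `ψ(s) = s₁ · ω^{m₁}(s₂) ⋯` with `s_i ∈ W_{n_i}` acting on
the `i`-th block; ω-invariance gives `χ_n(ψ(s)) = ∏ χ_{n_i}(s_i)`. Substituting this factorization
into `d_χ(A) = Σ_σ χ(σ) ∏_j a_{σ⁻¹(j), j}` and splitting the product over the blocks yields the
expansion in which `ρ` permutes the columns, i.e. the second formula.

The first formula is the second one for the transposed matrix, which is again a pairing matrix
because `E` is free of finite rank. It remains to see that the pairing is symmetric. Transposing
replaces `χ_d` by `χ_d⁻¹`; and if `χ_d(σ) ≠ χ_d(σ)⁻¹` for some `σ`, then the pairing vanishes in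
degree `d`: since `B` is defined on `[χ](E*)`, permuting the `x*`'s by `σ` multiplies it both by
`χ_d(σ)` and by `χ_d(σ)⁻¹`, and `K` is a domain.
-/

open Equiv Finset Function

lemma omegaPow_succ_apply (m : ℕ) (σ : Perm ℕ) (u : ℕ) :
    omegaPow (m + 1) σ (u + 1) = omegaPow m σ u + 1 := rfl

lemma omegaPow_apply_of_lt {m t : ℕ} (σ : Perm ℕ) (h : t < m) : omegaPow m σ t = t := by
  induction m generalizing t with
  | zero => omega
  | succ m ih =>
    cases t with
    | zero => rfl
    | succ u => rw [omegaPow_succ_apply, ih (by omega)]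

lemma omegaPow_apply_add (m : ℕ) (σ : Perm ℕ) (t : ℕ) : omegaPow m σ (m + t) = m + σ t := by
  induction m with
  | zero => simp [omegaPow]
  | succ m ih => rw [Nat.succ_add, omegaPow_succ_apply, ih]; omega

lemma omegaPow_apply_of_mem_Sfin {m e t : ℕ} {σ : Perm ℕ} (hσ : σ ∈ Sfin e)
    (ht : t < m ∨ m + e ≤ t) : omegaPow m σ t = t := by
  rcases ht with ht | ht
  · exact omegaPow_apply_of_lt σ ht
  · obtain ⟨u, rfl⟩ := Nat.exists_eq_add_of_le (le_of_add_le_left ht)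
    rw [omegaPow_apply_add, hσ u (by omega)]

namespace OmegaSeq

variable {K : Type*} [CommRing K] (S : OmegaSeq K)

lemma W_mono : Monotone S.W := monotone_nat_of_le_succ S.mono

lemma χ_of_le {d n : ℕ} (h : d ≤ n) {σ : Perm ℕ} (hσ : σ ∈ S.W d) :
    S.χ n ⟨σ, S.W_mono h hσ⟩ = S.χ d ⟨σ, hσ⟩ := by
  induction n, h using Nat.le_induction with
  | base => rfl
  | succ n hdn ih => exact (S.χ_res n σ _).trans ih

lemma omegaPow_mem (m : ℕ) {d : ℕ} {σ : Perm ℕ} (hσ : σ ∈ S.W d) :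
    omegaPow m σ ∈ S.W (d + m) := by
  induction m with
  | zero => exact hσ
  | succ m ih => exact S.omega_mem (d + m) _ ih

lemma χ_omegaPow (m : ℕ) {d : ℕ} {σ : Perm ℕ} (hσ : σ ∈ S.W d) :
    S.χ (d + m) ⟨omegaPow m σ, S.omegaPow_mem m hσ⟩ = S.χ d ⟨σ, hσ⟩ := by
  induction m with
  | zero => rfl
  | succ m ih => exact (S.χ_omega (d + m) _ (S.omegaPow_mem m hσ)).trans ih

lemma omegaPow_mem_of_le {m d n : ℕ} (h : m + d ≤ n) {σ : Perm ℕ} (hσ : σ ∈ S.W d) :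
    omegaPow m σ ∈ S.W n :=
  S.W_mono (by omega) (S.omegaPow_mem m hσ)

lemma χ_omegaPow_of_le {m d n : ℕ} (h : m + d ≤ n) {σ : Perm ℕ} (hσ : σ ∈ S.W d) :
    S.χ n ⟨omegaPow m σ, S.omegaPow_mem_of_le h hσ⟩ = S.χ d ⟨σ, hσ⟩ :=
  (S.χ_of_le (by omega) (S.omegaPow_mem m hσ)).trans (S.χ_omegaPow m hσ)

instance (d : ℕ) : Finite (S.W d) :=
  Finite.of_injective (fun σ : S.W d => restrictFin σ.1 (S.W_le d σ.2)) fun σ τ h => by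
    ext t
    rcases Nat.lt_or_ge t d with ht | ht
    · exact congrArg (fun e : Perm (Fin d) => (e ⟨t, ht⟩ : ℕ)) h
    · rw [S.W_le d σ.2 t ht, S.W_le d τ.2 t ht]

instance (d : ℕ) : Fintype (S.W d) := Fintype.ofFinite _

end OmegaSeq

section LexMin

variable {X : Subgroup (Perm ℕ)}

lemma lexLT_iff_toLex_lt {ι α : Type*} [LT ι] [LT α] (f g : ι → α) :
    lexLT f g ↔ toLex f < toLex g := Iff.rfl

lemma eq_of_lexMin_of_inv_mul_mem {ρ₁ ρ₂ : Perm ℕ}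
    (h₁ : ∀ x ∈ X, ¬ lexLT ⇑(ρ₁ * x) ⇑ρ₁) (h₂ : ∀ x ∈ X, ¬ lexLT ⇑(ρ₂ * x) ⇑ρ₂)
    (h : ρ₂⁻¹ * ρ₁ ∈ X) : ρ₁ = ρ₂ := by
  have le₁ := h₁ _ (inv_mem h)
  have le₂ := h₂ _ h
  simp only [lexLT_iff_toLex_lt, mul_inv_rev, inv_inv, mul_inv_cancel_left] at le₁ le₂
  exact DFunLike.coe_injective (toLex.injective (le_antisymm (not_lt.mp le₁) (not_lt.mp le₂)))

lemma exists_lexMin_mul [Finite X] (σ : Perm ℕ) :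
    ∃ x ∈ X, ∀ x' ∈ X, ¬ lexLT ⇑(σ * x * x') ⇑(σ * x) := by
  obtain ⟨x, hx⟩ := Finite.exists_min fun x : X => toLex ⇑(σ * x)
  refine ⟨x, x.2, fun x' hx' => (lexLT_iff_toLex_lt _ _).not.mpr (not_lt.mpr ?_)⟩
  rw [mul_assoc]
  exact hx ⟨_, mul_mem x.2 hx'⟩

end LexMin

section Blocks

variable {k n : ℕ} {c : Fin k → ℕ}

lemma offset_add_le_offset {i j : Fin k} (h : i < j) : offset c i + c i ≤ offset c j := by
  rw [offset, offset, add_comm, ← sum_insert (f := c) (by simp)]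
  exact sum_le_sum_of_subset fun a ha => by
    rcases mem_insert.mp ha with rfl | ha
    · exact mem_Iio.mpr h
    · exact mem_Iio.mpr ((mem_Iio.mp ha).trans h)

lemma offset_add_le (hc : ∑ i, c i = n) (i : Fin k) : offset c i + c i ≤ n := by
  rw [offset, add_comm, ← sum_insert (f := c) (by simp), ← hc]
  exact sum_le_sum_of_subset (subset_univ _)

lemma lt_offset_or_offset_add_le {i j : Fin k} (hij : i ≠ j) {u : ℕ}
    (hu : offset c i ≤ u ∧ u < offset c i + c i) : u < offset c j ∨ offset c j + c j ≤ u := by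
  rcases hij.lt_or_gt with h | h
  · have := offset_add_le_offset (c := c) h; omega
  · have := offset_add_le_offset (c := c) h; omega

lemma offset_eq_sum_castLE (i : Fin k) : offset c i = ∑ j : Fin i, c (Fin.castLE i.2.le j) := by
  refine (congrArg (Finset.sum · c) ?_).trans (sum_map univ (Fin.castLEEmb i.2.le) c)
  ext a
  simp only [mem_Iio, mem_map, mem_univ, Fin.castLEEmb_apply, true_and]
  exact ⟨fun h => ⟨⟨a, h⟩, rfl⟩, by rintro ⟨b, rfl⟩; exact b.2⟩

lemma prod_range_eq_prod_blocks {M : Type*} [CommMonoid M] (hc : ∑ i, c i = n) (f : ℕ → M) :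
    ∏ u ∈ range n, f u = ∏ i, ∏ t ∈ range (c i), f (offset c i + t) := by
  subst hc
  rw [← Fin.prod_univ_eq_prod_range, ← finSigmaFinEquiv.prod_comp, Fintype.prod_sigma]
  refine prod_congr rfl fun i _ => ?_
  rw [← Fin.prod_univ_eq_prod_range (fun t => f (offset c i + t))]
  simp [offset_eq_sum_castLE]

end Blocks

namespace OmegaSeq

variable {K : Type*} [CommRing K] (S : OmegaSeq K) {k n : ℕ} (c : Fin k → ℕ)

def blockPerm (i : Fin k) : S.W (c i) →* Perm ℕ :=
  (omegaPow (offset c i)).comp (S.W (c i)).subtype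

lemma blockPerm_apply_offset_add (i : Fin k) (g : S.W (c i)) (t : ℕ) :
    S.blockPerm c i g (offset c i + t) = offset c i + (g : Perm ℕ) t :=
  omegaPow_apply_add _ _ _

lemma blockPerm_apply_of_notMem (i : Fin k) (g : S.W (c i)) {u : ℕ}
    (hu : u < offset c i ∨ offset c i + c i ≤ u) : S.blockPerm c i g u = u :=
  omegaPow_apply_of_mem_Sfin (S.W_le _ g.2) hu

lemma blockPerm_commute :
    Pairwise fun i j => ∀ g h, Commute (S.blockPerm c i g) (S.blockPerm c j h) := by
  intro i j hij g h
  refine Perm.Disjoint.commute fun u => ?_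
  by_cases hu : offset c i ≤ u ∧ u < offset c i + c i
  · exact .inr (S.blockPerm_apply_of_notMem c j h (lt_offset_or_offset_add_le hij hu))
  · exact .inl (S.blockPerm_apply_of_notMem c i g (by omega))

/-- The product `Π i, W_{n_i} → X(n₁,…,n_k)`, the `i`-th factor acting on the `i`-th block. -/
def blockProd : (∀ i, S.W (c i)) →* Perm ℕ :=
  MonoidHom.noncommPiCoprod (S.blockPerm c) (S.blockPerm_commute c)

lemma range_blockProd : (S.blockProd c).range = Xsub S c := by
  rw [blockProd, MonoidHom.noncommPiCoprod_range, Xsub]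
  simp only [blockPerm, MonoidHom.range_comp, Subgroup.range_subtype]

lemma blockProd_eq_noncommProd (s : ∀ i, S.W (c i)) :
    S.blockProd c s = univ.noncommProd (fun j => S.blockPerm c j (s j))
      (fun _ _ _ _ hab => S.blockPerm_commute c hab _ _) := rfl

lemma blockProd_apply_offset_add (s : ∀ i, S.W (c i)) {i : Fin k} {t : ℕ} (ht : t < c i) :
    S.blockProd c s (offset c i + t) = offset c i + (s i : Perm ℕ) t := by
  have hrest : (univ.erase i).noncommProd (fun j => S.blockPerm c j (s j))
      (fun _ _ _ _ hab => S.blockPerm_commute c hab _ _) (offset c i + t) = offset c i + t := by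
    refine (Subgroup.noncommProd_mem (MulAction.stabilizer (Perm ℕ) (offset c i + t)) _
      fun j hj => ?_ : _ ∈ MulAction.stabilizer _ _)
    exact S.blockPerm_apply_of_notMem c j (s j)
      (lt_offset_or_offset_add_le (ne_of_mem_erase hj).symm ⟨le_self_add, by omega⟩)
  have hsplit : S.blockProd c s = S.blockPerm c i (s i) * (univ.erase i).noncommProd
      (fun j => S.blockPerm c j (s j)) (fun _ _ _ _ hab => S.blockPerm_commute c hab _ _) :=
    (mul_noncommProd_erase univ (mem_univ i) (fun j => S.blockPerm c j (s j))
      (fun _ _ _ _ hab => S.blockPerm_commute c hab _ _)).symm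
  rw [hsplit, Perm.mul_apply, hrest, blockPerm_apply_offset_add]

lemma blockProd_injective : Injective (S.blockProd c) := by
  intro s s' h
  funext i
  refine Subtype.ext (Equiv.ext fun t => ?_)
  rcases Nat.lt_or_ge t (c i) with ht | ht
  · have := S.blockProd_apply_offset_add c s ht
    rw [h, S.blockProd_apply_offset_add c s' ht] at this
    omega
  · rw [S.W_le _ (s i).2 t ht, S.W_le _ (s' i).2 t ht]

variable {c}

lemma blockPerm_mem (hc : ∑ i, c i = n) (i : Fin k) (g : S.W (c i)) :
    S.blockPerm c i g ∈ S.W n :=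
  S.omegaPow_mem_of_le (offset_add_le hc i) g.2

lemma blockProd_mem (hc : ∑ i, c i = n) (s : ∀ i, S.W (c i)) : S.blockProd c s ∈ S.W n :=
  S.blockProd_eq_noncommProd c s ▸
    Subgroup.noncommProd_mem _ _ fun j _ => S.blockPerm_mem hc j (s j)

def blockProdW (hc : ∑ i, c i = n) : (∀ i, S.W (c i)) →* S.W n :=
  (S.blockProd c).codRestrict (S.W n) (S.blockProd_mem hc)

lemma χ_blockProdW (hc : ∑ i, c i = n) (s : ∀ i, S.W (c i)) :
    S.χ n (S.blockProdW hc s) = ∏ i, S.χ (c i) (s i) := by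
  have hhom : (S.χ n).comp (S.blockProdW hc) =
      MonoidHom.noncommPiCoprod (fun i => S.χ (c i)) fun _ _ _ _ _ => Commute.all _ _ := by
    refine MonoidHom.pi_ext fun i (g : S.W (c i)) => ?_
    have hsingle :
        S.blockProdW hc (Pi.mulSingle i g : ∀ j, S.W (c j)) = ⟨_, S.blockPerm_mem hc i g⟩ :=
      Subtype.ext (MonoidHom.noncommPiCoprod_mulSingle (S.blockPerm c) i g)
    rw [MonoidHom.comp_apply, hsingle]
    exact (S.χ_omegaPow_of_le (offset_add_le hc i) g.2).trans
      (MonoidHom.noncommPiCoprod_mulSingle (fun i => S.χ (c i)) i g).symm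
  exact (DFunLike.congr_fun hhom s).trans (noncommProd_eq_prod univ fun i => S.χ (c i) (s i))

lemma blockProd_mem_Xsub (s : ∀ i, S.W (c i)) : S.blockProd c s ∈ Xsub S c :=
  S.range_blockProd c ▸ ⟨s, rfl⟩

instance : Finite (Xsub S c) :=
  S.range_blockProd c ▸ Finite.of_surjective _ (S.blockProd c).rangeRestrict_surjective

def minRepMul (hc : ∑ i, c i = n) :
    {ρ : S.W n // (ρ : Perm ℕ) ∈ MinRepSet S n c} × (∀ i, S.W (c i)) → S.W n :=
  fun p => p.1 * S.blockProdW hc p.2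

lemma minRepMul_bijective (hc : ∑ i, c i = n) : Bijective (S.minRepMul hc) := by
  constructor
  · rintro ⟨⟨ρ₁, h₁⟩, s₁⟩ ⟨⟨ρ₂, h₂⟩, s₂⟩ h
    have h' : (ρ₁ : Perm ℕ) * S.blockProd c s₁ = ρ₂ * S.blockProd c s₂ := congrArg Subtype.val h
    have hρ : (ρ₁ : Perm ℕ) = ρ₂ := by
      refine eq_of_lexMin_of_inv_mul_mem h₁.2 h₂.2 ?_
      have : (ρ₂ : Perm ℕ)⁻¹ * ρ₁ = S.blockProd c (s₂ * s₁⁻¹) := by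
        rw [map_mul, map_inv, eq_mul_inv_iff_mul_eq, mul_assoc, h', inv_mul_cancel_left]
      exact this ▸ S.blockProd_mem_Xsub _
    rw [hρ, mul_right_inj] at h'
    simp only [Prod.mk.injEq, Subtype.mk.injEq]
    exact ⟨Subtype.ext hρ, S.blockProd_injective c h'⟩
  · intro σ
    obtain ⟨x, hx, hmin⟩ := exists_lexMin_mul (X := Xsub S c) σ
    obtain ⟨s, rfl⟩ := (S.range_blockProd c).symm ▸ hx
    refine ⟨⟨⟨σ * S.blockProdW hc s, ⟨mul_mem σ.2 (S.blockProd_mem hc s), hmin⟩⟩, s⁻¹⟩, ?_⟩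
    simp [minRepMul]

open Classical in
lemma sum_eq_sum_minRepSet {M : Type*} [AddCommMonoid M] (hc : ∑ i, c i = n) (G : S.W n → M) :
    ∑ σ, G σ = ∑ ρ : S.W n, if (ρ : Perm ℕ) ∈ MinRepSet S n c then
      ∑ s : ∀ i, S.W (c i), G (ρ * S.blockProdW hc s) else 0 := by
  rw [← Fintype.sum_bijective _ (S.minRepMul_bijective hc) _ G fun _ => rfl,
    Fintype.sum_prod_type, ← sum_filter]
  exact (sum_subtype _ (fun _ => by simp) fun ρ => ∑ s, G (ρ * S.blockProdW hc s)).symm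

end OmegaSeq

section SchurFn

variable {K : Type*} [CommRing K] {W : Subgroup (Perm ℕ)} [Fintype W]

lemma prod_range_comp_perm {M : Type*} [CommMonoid M] {d : ℕ} {σ : Perm ℕ} (hσ : σ ∈ Sfin d)
    (f : ℕ → M) : ∏ u ∈ range d, f (σ u) = ∏ u ∈ range d, f u :=
  Perm.prod_comp σ _ f fun u hu => mem_range.mpr (by_contra fun h => hu (hσ u (not_lt.mp h)))

/-- The generalized Schur function `d_χ^W` of the matrix `(A i j)_{i,j<d}`. -/
def schurFn (χ : W →* Kˣ) (d : ℕ) (A : ℕ → ℕ → K) : K :=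
  ∑ σ : W, (χ σ : K) * ∏ t ∈ range d, A ((σ : Perm ℕ)⁻¹ t) t

lemma schurFn_swap {d : ℕ} (hW : W ≤ Sfin d) (χ : W →* Kˣ) (A : ℕ → ℕ → K) :
    schurFn χ d (swap A) = schurFn χ⁻¹ d A := by
  rw [schurFn, schurFn, ← Equiv.sum_comp (Equiv.inv W)]
  refine sum_congr rfl fun σ _ => ?_
  conv_rhs => rw [← prod_range_comp_perm (hW σ.2)]
  simp

lemma schurFn_comp_perm_right {d : ℕ} (hW : W ≤ Sfin d) (χ : W →* Kˣ) (σ : W)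
    (A : ℕ → ℕ → K) :
    schurFn χ d (fun a b => A a ((σ : Perm ℕ)⁻¹ b)) = χ σ * schurFn χ d A := by
  rw [schurFn, schurFn, mul_sum, ← Equiv.sum_comp (Equiv.mulLeft σ)]
  refine sum_congr rfl fun τ _ => ?_
  rw [← prod_range_comp_perm (hW σ.2)]
  simp [mul_assoc]

end SchurFn

namespace OmegaSeq

variable {K : Type*} [CommRing K] (S : OmegaSeq K) {k n : ℕ} {c : Fin k → ℕ}

lemma prod_range_mul_blockProdW (hc : ∑ i, c i = n) (A : ℕ → ℕ → K) (ρ : S.W n)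
    (s : ∀ i, S.W (c i)) :
    ∏ t ∈ range n, A (((ρ * S.blockProdW hc s : S.W n) : Perm ℕ)⁻¹ t) t =
      ∏ i, ∏ t ∈ range (c i),
        A (offset c i + ((s i : Perm ℕ))⁻¹ t) ((ρ : Perm ℕ) (offset c i + t)) := by
  rw [← prod_range_comp_perm (S.W_le n ρ.2), prod_range_eq_prod_blocks hc]
  have hcancel (u : ℕ) :
      ((ρ * S.blockProdW hc s : S.W n) : Perm ℕ)⁻¹ ((ρ : Perm ℕ) u) = S.blockProd c s⁻¹ u := by
    rw [Subgroup.coe_mul, mul_inv_rev, Perm.mul_apply, ← Perm.mul_apply ((ρ : Perm ℕ))⁻¹,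
      inv_mul_cancel, Perm.one_apply, map_inv]
    rfl
  refine prod_congr rfl fun i _ => prod_congr rfl fun t ht => ?_
  rw [hcancel, S.blockProd_apply_offset_add c _ (mem_range.mp ht)]
  rfl

open Classical in
theorem schurFn_laplace (hc : ∑ i, c i = n) (A : ℕ → ℕ → K) :
    schurFn (S.χ n) n A = ∑ ρ : S.W n, if (ρ : Perm ℕ) ∈ MinRepSet S n c then
      (S.χ n ρ : K) * ∏ i, schurFn (S.χ (c i)) (c i)
        (fun a b => A (offset c i + a) ((ρ : Perm ℕ) (offset c i + b))) else 0 := by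
  rw [schurFn, S.sum_eq_sum_minRepSet hc]
  refine sum_congr rfl fun ρ _ => if_ctx_congr Iff.rfl (fun _ => ?_) fun _ => rfl
  simp only [schurFn, Fintype.prod_sum, mul_sum]
  refine sum_congr rfl fun s _ => ?_
  rw [map_mul, Units.val_mul, S.χ_blockProdW hc, Units.coe_prod, S.prod_range_mul_blockProdW hc,
    prod_mul_distrib, mul_assoc]

end OmegaSeq

section Pairing

variable {K : Type*} [CommRing K] {E : Type*} [AddCommGroup E] [Module K E]

def pairMat (x : ℕ → E) (y : ℕ → Module.Dual K E) : ℕ → ℕ → K := fun a b => y b (x a)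

lemma Module.Basis.toDual_flip {ι : Type*} [DecidableEq ι] (b : Module.Basis ι K E) :
    b.toDual.flip = b.toDual :=
  b.ext fun i => b.ext fun j => by
    simp only [LinearMap.flip_apply, Module.Basis.toDual_apply, eq_comm]

lemma exists_pairMat_eq_swap [Module.Free K E] [Module.Finite K E] (x : ℕ → E)
    (y : ℕ → Module.Dual K E) :
    ∃ (x' : ℕ → E) (y' : ℕ → Module.Dual K E), pairMat x' y' = swap (pairMat x y) := by
  classical
  let b := Module.Free.chooseBasis K E
  refine ⟨fun a => b.toDualEquiv.symm (y a), fun a => b.toDual (x a), funext₂ fun a a' => ?_⟩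
  rw [pairMat, ← LinearMap.flip_apply, b.toDual_flip, ← b.toDualEquiv_apply,
    LinearEquiv.apply_symm_apply]
  rfl

end Pairing

namespace OmegaSeq

variable {K : Type*} [CommRing K] (S : OmegaSeq K) {E : Type*} [AddCommGroup E] [Module K E]

lemma pairVal_eq_schurFn (d : ℕ) (x : ℕ → E) (y : ℕ → Module.Dual K E) :
    pairVal S d x y = schurFn (S.χ d) d (pairMat x y) :=
  finsum_eq_sum_of_fintype _

lemma elN_comp_perm (d : ℕ) (σ : S.W d) (y : ℕ → E) :
    elN S d (fun t => y ((σ : Perm ℕ)⁻¹ t)) = (((S.χ d σ)⁻¹ : Kˣ) : K) • elN S d y := by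
  rw [elN, elN, decEl, decEl, ← map_smul, ← Submodule.Quotient.mk_smul]
  congr 1
  have hperm : PiTensorProduct.tprod K (fun t : Fin d => y ((σ : Perm ℕ)⁻¹ t)) =
      permAct K E d (rAct S d σ) (PiTensorProduct.tprod K fun t : Fin d => y t) := by
    rw [permAct, PiTensorProduct.reindex_tprod]
    rfl
  rw [hperm]
  exact ((Submodule.Quotient.eq (seqKer S E d)).mpr (Submodule.subset_span ⟨σ, _, rfl⟩)).symm

variable (B : SemiAlg S E →ₗ[K] SemiAlg S (Module.Dual K E) →ₗ[K] K)

-- Both sides are `B (elN x) (elN (y ∘ σ⁻¹))`: expanded as a Schur function, and through the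
-- relation `y ∘ σ⁻¹ = χ(σ)⁻¹ • y` in `[χ_d]^d(E*)`.
lemma χ_mul_schurFn_pairMat
    (hBdec : ∀ (d : ℕ) (x : ℕ → E) (y : ℕ → Module.Dual K E),
      B (elN S d x) (elN S d y) = pairVal S d x y)
    (d : ℕ) (σ : S.W d) (x : ℕ → E) (y : ℕ → Module.Dual K E) :
    (S.χ d σ : K) * schurFn (S.χ d) d (pairMat x y) =
      (((S.χ d σ)⁻¹ : Kˣ) : K) * schurFn (S.χ d) d (pairMat x y) := by
  have h := hBdec d x fun t => y ((σ : Perm ℕ)⁻¹ t)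
  rw [S.elN_comp_perm, map_smul, hBdec, smul_eq_mul, pairVal_eq_schurFn, pairVal_eq_schurFn] at h
  exact (schurFn_comp_perm_right (S.W_le d) _ σ (pairMat x y)).symm.trans h.symm

lemma schurFn_swap_pairMat [IsDomain K] [Module.Free K E] [Module.Finite K E]
    (hBdec : ∀ (d : ℕ) (x : ℕ → E) (y : ℕ → Module.Dual K E),
      B (elN S d x) (elN S d y) = pairVal S d x y)
    (d : ℕ) (x : ℕ → E) (y : ℕ → Module.Dual K E) :
    schurFn (S.χ d) d (swap (pairMat x y)) = schurFn (S.χ d) d (pairMat x y) := by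
  obtain ⟨x', y', hswap⟩ := exists_pairMat_eq_swap x y
  by_cases hinv : (S.χ d)⁻¹ = S.χ d
  · rw [schurFn_swap (S.W_le d), hinv]
  · obtain ⟨σ, hσ⟩ : ∃ σ, (S.χ d σ)⁻¹ ≠ S.χ d σ := by
      contrapose! hinv
      exact MonoidHom.ext hinv
    have hvanish (x : ℕ → E) (y : ℕ → Module.Dual K E) :
        schurFn (S.χ d) d (pairMat x y) = 0 := by
      have h := S.χ_mul_schurFn_pairMat B hBdec d σ x y
      rw [← sub_eq_zero, ← sub_mul] at h
      exact (mul_eq_zero.mp h).resolve_left (sub_ne_zero.mpr (Units.val_injective.ne hσ.symm))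
    rw [← hswap, hvanish, hvanish]

end OmegaSeq

open Classical in
theorem pairing_laplace_general {K : Type*} [CommRing K] [IsDomain K]
    (S : OmegaSeq K) {E : Type*} [AddCommGroup E] [Module K E]
    [Module.Free K E] [Module.Finite K E]
    (B : SemiAlg S E →ₗ[K] SemiAlg S (Module.Dual K E) →ₗ[K] K)
    (hBdec : ∀ (d : ℕ) (x : ℕ → E) (y : ℕ → Module.Dual K E),
      B (elN S d x) (elN S d y) = pairVal S d x y)
    {k : ℕ} (n : ℕ) (c : Fin k → ℕ) (hc : ∑ i, c i = n)
    (x : ℕ → E) (y : ℕ → Module.Dual K E) :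
    B (elN S n x) (elN S n y)
      = (∑ᶠ ρ : S.W n, if (ρ : Equiv.Perm ℕ) ∈ MinRepSet S n c then
          ((S.χ n ρ : Kˣ) : K) *
            ∏ i, B (elN S (c i) (fun t => x ((ρ : Equiv.Perm ℕ) (offset c i + t))))
                   (elN S (c i) (fun t => y (offset c i + t)))
        else 0) ∧
    B (elN S n x) (elN S n y)
      = (∑ᶠ ρ : S.W n, if (ρ : Equiv.Perm ℕ) ∈ MinRepSet S n c then
          ((S.χ n ρ : Kˣ) : K) *
            ∏ i, B (elN S (c i) (fun t => x (offset c i + t)))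
                   (elN S (c i) (fun t => y ((ρ : Equiv.Perm ℕ) (offset c i + t))))
        else 0) := by
  have hB (d : ℕ) (x : ℕ → E) (y : ℕ → Module.Dual K E) :
      B (elN S d x) (elN S d y) = schurFn (S.χ d) d (pairMat x y) :=
    (hBdec d x y).trans (S.pairVal_eq_schurFn d x y)
  have hsymm := S.schurFn_swap_pairMat B hBdec
  simp only [finsum_eq_sum_of_fintype, hB]
  refine ⟨?_, S.schurFn_laplace hc _⟩
  rw [← hsymm, S.schurFn_laplace hc]
  exact sum_congr rfl fun ρ _ => if_ctx_congr Iff.rfl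
    (fun _ => congrArg _ (prod_congr rfl fun i _ => hsymm _ _ _)) fun _ => rfl

open Classical in
/-- Proposition III.18, Laplace expansions of the canonical
bilinear form. For `n = n₁ + ⋯ + n_k`:
`⟨x₁χ⋯χxₙ, x₁*χ⋯χxₙ*⟩ = Σ_{ρ ∈ M(χ;n;n₁,…,n_k)} χₙ(ρ) ∏_i
⟨x_{ρ(m_{i−1}+1)}χ⋯χx_{ρ(m_i)}, x_{m_{i−1}+1}*χ⋯χx_{m_i}*⟩`, and the
symmetric expansion with `ρ` acting on the second factors. -/
theorem pairing_laplace {K : Type*} [CommRing K] [Algebra ℚ K] [IsDomain K]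
    (S : OmegaSeq K) {E : Type*} [AddCommGroup E] [Module K E]
    [Module.Free K E] [Module.Finite K E]
    (B : SemiAlg S E →ₗ[K] SemiAlg S (Module.Dual K E) →ₗ[K] K)
    (hBorth : ∀ r s : ℕ, r ≠ s →
      ∀ (ξ : Qpow S E r) (η : Qpow S (Module.Dual K E) s),
        B (DirectSum.lof K ℕ (fun d => Qpow S E d) r ξ)
          (DirectSum.lof K ℕ (fun d => Qpow S (Module.Dual K E) d) s η) = 0)
    (hBdec : ∀ (d : ℕ) (x : ℕ → E) (y : ℕ → Module.Dual K E),
      B (elN S d x) (elN S d y) = pairVal S d x y)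
    {k : ℕ} (n : ℕ) (c : Fin k → ℕ) (hc : ∑ i, c i = n)
    (x : ℕ → E) (y : ℕ → Module.Dual K E) :
    B (elN S n x) (elN S n y)
      = (∑ᶠ ρ : S.W n, if (ρ : Equiv.Perm ℕ) ∈ MinRepSet S n c then
          ((S.χ n ρ : Kˣ) : K) *
            ∏ i, B (elN S (c i) (fun t => x ((ρ : Equiv.Perm ℕ) (offset c i + t))))
                   (elN S (c i) (fun t => y (offset c i + t)))
        else 0) ∧
    B (elN S n x) (elN S n y)
      = (∑ᶠ ρ : S.W n, if (ρ : Equiv.Perm ℕ) ∈ MinRepSet S n c then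
          ((S.χ n ρ : Kˣ) : K) *
            ∏ i, B (elN S (c i) (fun t => x (offset c i + t)))
                   (elN S (c i) (fun t => y ((ρ : Equiv.Perm ℕ) (offset c i + t))))
        else 0) :=
  pairing_laplace_general S B hBdec n c hc x y
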